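/- Let A ∈ ℍ^{m×n} be a quaternion matrix, let S, T ∈ ℍ^{n×m}, let Y ∈ ℍ^{m×n} be a {1}-inverse of TAS (i.e. (TAS)·Y·(TAS) = TAS), and set X = SYT. If rank(TAS) = rank(S) = rank(T), then X is the unique quaternion matrix in ℍ^{n×m} satisfying all of: XAX = X, R_r(X) = R_r(S), N_r(X) = N_r(T), R_l(X) = R_l(T), and N_l(X) = N_l(S). -/

import Mathlib

/-!
Put `B = TAS`. Since `R_l(B) ⊆ R_l(S)` and `N_l(T) ⊆ N_l(B)`, the rank conditions force
`R_l(B) = R_l(S)` and `N_l(B) = N_l(T)`, i.e. `S = UB` and `T = BV` for some `U`, `V`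
(the second factorisation uses that linear maps over a division ring factor through
any map with smaller kernel). Then `BYB = B` gives `XAS = S` and `TAX = T`, hence
`XAX = X`, and each of the four range/null-space equalities follows because each of the
two matrices involved is a one-sided multiple of the other. For uniqueness,
`R_l(Z) = R_l(X)` and `R_r(Z) = R_r(X)` give `Z = QX` and `X = ZW`, so
`Z = QXAX = ZAX = ZAZW = ZW = X`.
-/

open Matrix

noncomputable section

/-- The real quaternion division ring ℍ. -/
abbrev Quat : Type := Quaternion ℝ

/-- Left range `R_l(A) = {xA : x ∈ ℍ^{1×m}} ⊆ ℍ^{1×n}`. -/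
def leftRange {m n : ℕ} (A : Matrix (Fin m) (Fin n) Quat) : Set (Fin n → Quat) :=
  {y | ∃ x : Fin m → Quat, y = Matrix.vecMul x A}

/-- Left null space `N_l(A) = {x ∈ ℍ^{1×m} : xA = 0}`. -/
def leftNull {m n : ℕ} (A : Matrix (Fin m) (Fin n) Quat) : Set (Fin m → Quat) :=
  {x | Matrix.vecMul x A = 0}

/-- Right range `R_r(A) = {Ax : x ∈ ℍ^{n×1}} ⊆ ℍ^{m×1}`. -/
def rightRange {m n : ℕ} (A : Matrix (Fin m) (Fin n) Quat) : Set (Fin m → Quat) :=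
  {y | ∃ x : Fin n → Quat, y = Matrix.mulVec A x}

/-- Right null space `N_r(A) = {x ∈ ℍ^{n×1} : Ax = 0}`. -/
def rightNull {m n : ℕ} (A : Matrix (Fin m) (Fin n) Quat) : Set (Fin n → Quat) :=
  {x | Matrix.mulVec A x = 0}

/-- The rank of a quaternion matrix: the dimension of its left range
(the left ℍ-span of its rows) as a left ℍ-vector space. -/
def qRank {m n : ℕ} (A : Matrix (Fin m) (Fin n) Quat) : ℕ :=
  Module.finrank Quat (Submodule.span Quat (Set.range (fun i : Fin m => A i)))

theorem LinearMap.exists_comp_eq_of_ker_le {K V W U : Type*} [DivisionRing K]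
    [AddCommGroup V] [AddCommGroup W] [AddCommGroup U] [Module K V] [Module K W] [Module K U]
    (f : V →ₗ[K] W) (g : V →ₗ[K] U) (h : LinearMap.ker f ≤ LinearMap.ker g) :
    ∃ ψ : W →ₗ[K] U, ψ ∘ₗ f = g := by
  obtain ⟨ψ, hψ⟩ := LinearMap.exists_extend
    ((LinearMap.ker f).liftQ g h ∘ₗ (f.quotKerEquivRange.symm : LinearMap.range f →ₗ[K] _))
  refine ⟨ψ, LinearMap.ext fun x => ?_⟩
  have := LinearMap.congr_fun hψ ⟨f x, LinearMap.mem_range_self f x⟩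
  simpa [LinearMap.quotKerEquivRange_symm_apply_image] using this

section QuaternionMatrix

variable {k m n : ℕ}

theorem leftRange_eq_range_vecMulLinear (M : Matrix (Fin m) (Fin n) Quat) :
    leftRange M = LinearMap.range M.vecMulLinear := by
  ext y
  simp [leftRange, eq_comm]

theorem leftNull_eq_ker_vecMulLinear (M : Matrix (Fin m) (Fin n) Quat) :
    leftNull M = LinearMap.ker M.vecMulLinear := rfl

theorem qRank_eq_finrank_range_vecMulLinear (M : Matrix (Fin m) (Fin n) Quat) :
    qRank M = Module.finrank Quat (LinearMap.range M.vecMulLinear) := by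
  rw [range_vecMulLinear]; rfl

theorem leftRange_mul_subset (M : Matrix (Fin k) (Fin m) Quat) (N : Matrix (Fin m) (Fin n) Quat) :
    leftRange (M * N) ⊆ leftRange N := by
  rintro _ ⟨x, rfl⟩
  exact ⟨x ᵥ* M, (vecMul_vecMul x M N).symm⟩

theorem leftNull_subset_leftNull_mul (M : Matrix (Fin k) (Fin m) Quat)
    (N : Matrix (Fin m) (Fin n) Quat) : leftNull M ⊆ leftNull (M * N) := by
  intro x (hx : x ᵥ* M = 0)
  show x ᵥ* (M * N) = 0
  rw [← vecMul_vecMul, hx, zero_vecMul]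

theorem rightRange_mul_subset (M : Matrix (Fin k) (Fin m) Quat) (N : Matrix (Fin m) (Fin n) Quat) :
    rightRange (M * N) ⊆ rightRange M := by
  rintro _ ⟨x, rfl⟩
  exact ⟨N *ᵥ x, (mulVec_mulVec x M N).symm⟩

theorem rightNull_subset_rightNull_mul (M : Matrix (Fin k) (Fin m) Quat)
    (N : Matrix (Fin m) (Fin n) Quat) : rightNull N ⊆ rightNull (M * N) := by
  intro x (hx : N *ᵥ x = 0)
  show (M * N) *ᵥ x = 0
  rw [← mulVec_mulVec, hx, mulVec_zero]

theorem exists_eq_mul_of_leftRange_subset {M : Matrix (Fin m) (Fin n) Quat}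
    {N : Matrix (Fin k) (Fin n) Quat} (h : leftRange N ⊆ leftRange M) :
    ∃ U : Matrix (Fin k) (Fin m) Quat, N = U * M := by
  have hrow : ∀ i, ∃ x, N i = x ᵥ* M := fun i =>
    h ⟨Pi.single i 1, (single_one_vecMul i N).symm⟩
  choose x hx using hrow
  exact ⟨Matrix.of x, funext hx⟩

theorem exists_eq_mul_of_rightRange_subset {M : Matrix (Fin m) (Fin n) Quat}
    {N : Matrix (Fin m) (Fin k) Quat} (h : rightRange N ⊆ rightRange M) :
    ∃ W : Matrix (Fin n) (Fin k) Quat, N = M * W := by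
  have hcol : ∀ j, ∃ y, N *ᵥ Pi.single j 1 = M *ᵥ y := fun j => h ⟨Pi.single j 1, rfl⟩
  choose y hy using hcol
  refine ⟨(Matrix.of y)ᵀ, ext_of_mulVec_single fun j => ?_⟩
  rw [hy, ← mulVec_mulVec, mulVec_single_one]
  rfl

theorem exists_eq_mul_of_leftNull_subset {M : Matrix (Fin m) (Fin n) Quat}
    {N : Matrix (Fin m) (Fin k) Quat} (h : leftNull M ⊆ leftNull N) :
    ∃ V : Matrix (Fin n) (Fin k) Quat, N = M * V := by
  obtain ⟨ψ, hψ⟩ := LinearMap.exists_comp_eq_of_ker_le M.vecMulLinear N.vecMulLinear h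
  have hvecMul : ∀ y, y ᵥ* LinearMap.toMatrixRight' ψ = ψ y :=
    LinearMap.congr_fun (LinearMap.toMatrixRight'.symm_apply_apply ψ)
  refine ⟨LinearMap.toMatrixRight' ψ, ext_iff_vecMul.mpr fun x => ?_⟩
  rw [← vecMul_vecMul, hvecMul]
  exact (LinearMap.congr_fun hψ x).symm

theorem leftRange_mul_eq_of_qRank_eq (P : Matrix (Fin k) (Fin m) Quat)
    (S : Matrix (Fin m) (Fin n) Quat) (h : qRank (P * S) = qRank S) :
    leftRange (P * S) = leftRange S := by
  have hle : LinearMap.range (P * S).vecMulLinear ≤ LinearMap.range S.vecMulLinear := by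
    simpa only [← SetLike.coe_subset_coe, ← leftRange_eq_range_vecMulLinear]
      using leftRange_mul_subset P S
  have hrank := h
  rw [qRank_eq_finrank_range_vecMulLinear, qRank_eq_finrank_range_vecMulLinear] at hrank
  rw [leftRange_eq_range_vecMulLinear, leftRange_eq_range_vecMulLinear,
    Submodule.eq_of_le_of_finrank_eq hle hrank]

theorem leftNull_mul_eq_of_qRank_eq (T : Matrix (Fin m) (Fin n) Quat)
    (Q : Matrix (Fin n) (Fin k) Quat) (h : qRank (T * Q) = qRank T) :
    leftNull (T * Q) = leftNull T := by
  have hle : LinearMap.ker T.vecMulLinear ≤ LinearMap.ker (T * Q).vecMulLinear :=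
    leftNull_subset_leftNull_mul T Q
  have hrank : Module.finrank Quat (LinearMap.ker T.vecMulLinear) =
      Module.finrank Quat (LinearMap.ker (T * Q).vecMulLinear) := by
    have hT := LinearMap.finrank_range_add_finrank_ker T.vecMulLinear
    have hTQ := LinearMap.finrank_range_add_finrank_ker (T * Q).vecMulLinear
    rw [← qRank_eq_finrank_range_vecMulLinear] at hT hTQ
    omega
  rw [leftNull_eq_ker_vecMulLinear, leftNull_eq_ker_vecMulLinear,
    Submodule.eq_of_le_of_finrank_eq hle hrank]

end QuaternionMatrix

theorem Matrix.eq_of_mul_mul_self_eq_of_eq_mul {α : Type*} [Semiring α]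
    {l m : Type*} [Fintype l] [Fintype m]
    {A : Matrix l m α} {X Z : Matrix m l α} {Q : Matrix m m α} {W : Matrix l l α}
    (hX : X * A * X = X) (hZ : Z * A * Z = Z) (hZQ : Z = Q * X) (hXW : X = Z * W) : Z = X :=
  calc Z = Q * (X * A * X) := by rw [hX, hZQ]
    _ = Z * A * X := by rw [hZQ]; simp only [Matrix.mul_assoc]
    _ = Z * A * (Z * W) := by rw [← hXW]
    _ = X := by rw [← Matrix.mul_assoc, hZ, ← hXW]

/-- Theorem 3.6. -/
theorem stmt12 {m n : ℕ} (A : Matrix (Fin m) (Fin n) Quat)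
    (S T : Matrix (Fin n) (Fin m) Quat)
    (Y : Matrix (Fin m) (Fin n) Quat)
    (hY : (T * A * S) * Y * (T * A * S) = T * A * S)
    (X : Matrix (Fin n) (Fin m) Quat) (hX : X = S * Y * T)
    (h1 : qRank (T * A * S) = qRank S) (h2 : qRank (T * A * S) = qRank T) :
    (X * A * X = X ∧ rightRange X = rightRange S ∧ rightNull X = rightNull T ∧
      leftRange X = leftRange T ∧ leftNull X = leftNull S) ∧
    (∀ Z : Matrix (Fin n) (Fin m) Quat,
      Z * A * Z = Z → rightRange Z = rightRange S → rightNull Z = rightNull T →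
        leftRange Z = leftRange T → leftNull Z = leftNull S → Z = X) := by
  obtain ⟨U, hSU⟩ := exists_eq_mul_of_leftRange_subset
    (leftRange_mul_eq_of_qRank_eq (T * A) S h1).superset
  obtain ⟨V, hTV⟩ := exists_eq_mul_of_leftNull_subset
    (leftNull_mul_eq_of_qRank_eq T (A * S) (by rwa [← Matrix.mul_assoc])).subset
  rw [← Matrix.mul_assoc] at hTV
  generalize hB : T * A * S = B at hY hSU hTV
  have hXAS : X * (A * S) = S :=
    calc X * (A * S) = S * Y * (T * A * S) := by rw [hX]; simp only [Matrix.mul_assoc]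
      _ = U * (B * Y * B) := by rw [hB, hSU]; simp only [Matrix.mul_assoc]
      _ = S := by rw [hY, hSU]
  have hTAX : T * A * X = T :=
    calc T * A * X = B * Y * (B * V) := by rw [hX, ← hTV, ← hB]; simp only [Matrix.mul_assoc]
      _ = T := by rw [← Matrix.mul_assoc, hY, hTV]
  have hXAX : X * A * X = X :=
    calc X * A * X = X * (A * S) * (Y * T) := by rw [hX]; simp only [Matrix.mul_assoc]
      _ = X := by rw [hXAS, ← Matrix.mul_assoc, hX]
  have hSYT : S * (Y * T) = X := by rw [hX, Matrix.mul_assoc]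
  have hRr : rightRange X = rightRange S := subset_antisymm
    (hSYT ▸ rightRange_mul_subset S (Y * T)) (hXAS ▸ rightRange_mul_subset X (A * S))
  have hNr : rightNull X = rightNull T := subset_antisymm
    (hTAX ▸ rightNull_subset_rightNull_mul (T * A) X) (hX ▸ rightNull_subset_rightNull_mul _ T)
  have hRl : leftRange X = leftRange T := subset_antisymm
    (hX ▸ leftRange_mul_subset (S * Y) T) (hTAX ▸ leftRange_mul_subset (T * A) X)
  have hNl : leftNull X = leftNull S := subset_antisymm
    (hXAS ▸ leftNull_subset_leftNull_mul X (A * S)) (hSYT ▸ leftNull_subset_leftNull_mul S _)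
  refine ⟨⟨hXAX, hRr, hNr, hRl, hNl⟩, fun Z hZAZ hZr _ hZl _ => ?_⟩
  obtain ⟨Q, hZQ⟩ := exists_eq_mul_of_leftRange_subset (hZl.trans hRl.symm).subset
  obtain ⟨W, hXW⟩ := exists_eq_mul_of_rightRange_subset (hRr.trans hZr.symm).subset
  exact eq_of_mul_mul_self_eq_of_eq_mul hXAX hZAZ hZQ hXW
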